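/- arXiv:2303.00618 — 2 statements merged into one kernel-verified Lean document; each statement's English description precedes it below -/
import Mathlib

section
/- Let N be odd, let H₁, …, H_N be d×d complex Hermitian matrices, let ψ₀ ∈ ℂ^d be a unit vector, and for ε ∈ ℝ^N define ψ(ε) = exp(−i(1+ε₁)H₁)···exp(−i(1+ε_N)H_N)·ψ₀ (ordered matrix product applied to ψ₀). Then ‖H_N‖₂ + √2·Σ_{i=1}^{(N−1)/2} ‖[H_{2i−1} H_{2i}]‖₂ is a Lipschitz bound of ψ with respect to the ∞-norm, i.e. for all ε, ε′ ∈ ℝ^N: ‖ψ(ε) − ψ(ε′)‖₂ ≤ (‖H_N‖₂ + √2·Σ_{i=1}^{(N−1)/2} ‖[H_{2i−1} H_{2i}]‖₂)·‖ε − ε′‖_∞. -/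
/-!
Every gate `exp(−i(1+εᵢ)Hᵢ)` is unitary, so the difference of two ordered products of gates
telescopes into a sum of differences of factors; we group the factors in consecutive pairs plus
the final gate. For a pair, pulling out unitaries leaves `‖exp(−isA) exp(−itB) − 1‖`, and the mean
value inequality along `u ↦ exp(−iusA) exp(−iutB)`, whose derivative is `−i(sA + tB)` multiplied
by unitaries on both sides, bounds it by `‖sA + tB‖`. Since `(sA + tB)v = [A B](sv, tv)`, this is
at most `√(s² + t²) ‖[A B]‖ ≤ √2 ‖[A B]‖ ‖ε − ε'‖_∞`.
-/

set_option autoImplicit false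

open scoped Matrix

/-- The operator norm (induced 2-norm, i.e. maximum singular value) of a complex matrix. -/
noncomputable def opNorm {m n : Type*} [Fintype m] [Fintype n] [DecidableEq n]
    (A : Matrix m n ℂ) : ℝ :=
  ‖LinearMap.toContinuousLinearMap (Matrix.toEuclideanLin A)‖

/-- The noisy circuit state `ψ(ε) = exp(−i(1+ε₁)H₁) ⋯ exp(−i(1+ε_N)H_N) ψ₀`
(ordered matrix product applied to `ψ₀`). -/
noncomputable def circuitState {d N : ℕ} (H : Fin N → Matrix (Fin d) (Fin d) ℂ)
    (ψ₀ : EuclideanSpace ℂ (Fin d)) (ε : Fin N → ℝ) : EuclideanSpace ℂ (Fin d) :=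
  Matrix.toEuclideanLin
    (List.ofFn fun i => NormedSpace.exp ((-Complex.I * (1 + (ε i : ℂ))) • H i)).prod ψ₀

open NormedSpace

theorem List.prod_ofFn_two_mul_add_one {M : Type*} [Monoid M] {m : ℕ}
    (g : Fin (2 * m + 1) → M) :
    (List.ofFn g).prod =
      (List.ofFn fun k : Fin m => g ⟨2 * k, by omega⟩ * g ⟨2 * k + 1, by omega⟩).prod *
        g ⟨2 * m, by omega⟩ := by
  rw [List.ofFn_succ', List.prod_concat, List.ofFn_mul', List.prod_flatten, List.map_ofFn]
  simp [List.ofFn_succ, Function.comp_def, Fin.last]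

theorem Real.sqrt_sq_add_sq_le_sqrt_two_mul {x y c : ℝ} (hx : |x| ≤ c) (hy : |y| ≤ c) :
    √(x ^ 2 + y ^ 2) ≤ √2 * c := by
  have hc : 0 ≤ c := (abs_nonneg x).trans hx
  rw [← Real.sqrt_sq hc, ← Real.sqrt_mul zero_le_two]
  gcongr
  nlinarith [sq_abs x, sq_abs y, abs_nonneg x, abs_nonneg y]

section CStarAlgebra

variable {A : Type*} [CStarAlgebra A]

theorem norm_mul_sub_mul_le_of_mem_unitary {u v x y : A} (hu : u ∈ unitary A)
    (hy : y ∈ unitary A) : ‖u * x - v * y‖ ≤ ‖u - v‖ + ‖x - y‖ := calc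
  ‖u * x - v * y‖ = ‖u * (x - y) + (u - v) * y‖ := by noncomm_ring
  _ ≤ ‖u - v‖ + ‖x - y‖ := by
    rw [add_comm ‖u - v‖, ← CStarRing.norm_mem_unitary_mul (x - y) hu,
      ← CStarRing.norm_mul_mem_unitary (u - v) hy]
    exact norm_add_le _ _

theorem norm_prod_ofFn_sub_prod_ofFn_le {n : ℕ} {u v : Fin n → A}
    (hu : ∀ i, u i ∈ unitary A) (hv : ∀ i, v i ∈ unitary A) :
    ‖(List.ofFn u).prod - (List.ofFn v).prod‖ ≤ ∑ i, ‖u i - v i‖ := by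
  induction n with
  | zero => simp
  | succ n ih =>
    simp only [List.ofFn_succ, List.prod_cons, Fin.sum_univ_succ]
    refine (norm_mul_sub_mul_le_of_mem_unitary (hu 0) ?_).trans
      (add_le_add_right (ih (fun i => hu i.succ) (fun i => hv i.succ)) _)
    exact Submonoid.list_prod_mem _ (List.forall_mem_ofFn_iff.2 fun i => hv i.succ)

theorem norm_prod_ofFn_sub_prod_ofFn_le_of_pairs {m : ℕ} {u v : Fin (2 * m + 1) → A}
    (hu : ∀ i, u i ∈ unitary A) (hv : ∀ i, v i ∈ unitary A) :
    ‖(List.ofFn u).prod - (List.ofFn v).prod‖ ≤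
      ∑ k : Fin m, ‖u ⟨2 * k, by omega⟩ * u ⟨2 * k + 1, by omega⟩ -
          v ⟨2 * k, by omega⟩ * v ⟨2 * k + 1, by omega⟩‖ +
        ‖u ⟨2 * m, by omega⟩ - v ⟨2 * m, by omega⟩‖ := by
  rw [List.prod_ofFn_two_mul_add_one u, List.prod_ofFn_two_mul_add_one v]
  refine (norm_mul_sub_mul_le_of_mem_unitary ?_ (hv _)).trans
    (add_le_add_left (norm_prod_ofFn_sub_prod_ofFn_le (fun k => mul_mem (hu _) (hu _))
      (fun k => mul_mem (hv _) (hv _))) _)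
  exact Submonoid.list_prod_mem _
    (List.forall_mem_ofFn_iff.2 fun k => mul_mem (hu _) (hu _))

theorem norm_exp_mul_exp_sub_one_le {x y : A} (hx : x ∈ skewAdjoint A)
    (hy : y ∈ skewAdjoint A) : ‖exp x * exp y - 1‖ ≤ ‖x + y‖ := by
  -- the library's facts about `exp` are stated for normed `ℚ`-algebras
  let _ : NormedAlgebra ℚ A := .restrictScalars ℚ ℂ A
  have hU : ∀ (u : ℝ) {z : A}, z ∈ skewAdjoint A → exp (u • z) ∈ unitary A := fun u z hz =>
    exp_mem_unitary_of_mem_skewAdjoint (skewAdjoint.smul_mem u hz)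
  have hderiv : ∀ u : ℝ, HasDerivAt (fun u : ℝ => exp (u • x) * exp (u • y))
      (exp (u • x) * (x + y) * exp (u • y)) u := fun u =>
    ((hasDerivAt_exp_smul_const x u).mul (hasDerivAt_exp_smul_const' y u)).congr_deriv
      (by noncomm_ring)
  have hbound : ∀ u : ℝ, ‖exp (u • x) * (x + y) * exp (u • y)‖ ≤ ‖x + y‖ := fun u => by
    rw [CStarRing.norm_mul_mem_unitary _ (hU u hy), CStarRing.norm_mem_unitary_mul _ (hU u hx)]
  simpa using norm_image_sub_le_of_norm_deriv_le_segment_01'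
    (fun u _ => (hderiv u).hasDerivWithinAt) (fun u _ => hbound u)

theorem exp_add_smul (a : A) (c d : ℂ) : exp ((c + d) • a) = exp (c • a) * exp (d • a) := by
  let _ : NormedAlgebra ℚ A := .restrictScalars ℚ ℂ A
  rw [add_smul, exp_add_of_commute (((Commute.refl a).smul_left c).smul_right d)]

theorem Complex.neg_I_mul_ofReal_mem_skewAdjoint (r : ℝ) :
    -Complex.I * r ∈ skewAdjoint ℂ := by
  simp [skewAdjoint.mem_iff]

noncomputable def noisyGate (a : A) (θ : ℝ) : A :=
  exp ((-Complex.I * (1 + (θ : ℂ))) • a)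

theorem IsSelfAdjoint.noisyGate_mem_unitary {a : A} (ha : IsSelfAdjoint a) (θ : ℝ) :
    noisyGate a θ ∈ unitary A := by
  let _ : NormedAlgebra ℚ A := .restrictScalars ℚ ℂ A
  exact exp_mem_unitary_of_mem_skewAdjoint <| by
    simpa using ha.smul_mem_skewAdjoint (Complex.neg_I_mul_ofReal_mem_skewAdjoint (1 + θ))

theorem norm_noisyGate_mul_sub_le {a b : A} (ha : IsSelfAdjoint a) (hb : IsSelfAdjoint b)
    (s t s' t' : ℝ) :
    ‖noisyGate a s * noisyGate b t - noisyGate a s' * noisyGate b t'‖ ≤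
      ‖((s - s' : ℝ) : ℂ) • a + ((t - t' : ℝ) : ℂ) • b‖ := by
  set x := (-Complex.I * (s - s' : ℝ)) • a
  set y := (-Complex.I * (t - t' : ℝ)) • b
  have hs : noisyGate a s = noisyGate a s' * exp x := by
    rw [noisyGate, noisyGate, ← exp_add_smul]; congr 2; push_cast; ring
  have ht : noisyGate b t = exp y * noisyGate b t' := by
    rw [noisyGate, noisyGate, ← exp_add_smul]; congr 2; push_cast; ring
  have hxy : x + y = -Complex.I • (((s - s' : ℝ) : ℂ) • a + ((t - t' : ℝ) : ℂ) • b) := by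
    simp only [x, y, smul_add, smul_smul, neg_mul]
  calc ‖noisyGate a s * noisyGate b t - noisyGate a s' * noisyGate b t'‖
      = ‖noisyGate a s' * (exp x * exp y - 1) * noisyGate b t'‖ := by
        rw [hs, ht]; noncomm_ring
    _ = ‖exp x * exp y - 1‖ := by
        rw [CStarRing.norm_mul_mem_unitary _ (hb.noisyGate_mem_unitary t'),
          CStarRing.norm_mem_unitary_mul _ (ha.noisyGate_mem_unitary s')]
    _ ≤ ‖x + y‖ := norm_exp_mul_exp_sub_one_le
        (ha.smul_mem_skewAdjoint (Complex.neg_I_mul_ofReal_mem_skewAdjoint _))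
        (hb.smul_mem_skewAdjoint (Complex.neg_I_mul_ofReal_mem_skewAdjoint _))
    _ = _ := by rw [hxy, norm_smul, norm_neg, Complex.norm_I, one_mul]

theorem norm_noisyGate_sub_le {a : A} (ha : IsSelfAdjoint a) (s s' : ℝ) :
    ‖noisyGate a s - noisyGate a s'‖ ≤ |s - s'| * ‖a‖ := by
  have h := norm_noisyGate_mul_sub_le ha (.zero A) s 0 s' 0
  simp only [noisyGate, smul_zero, add_zero, exp_zero, mul_one] at h
  rwa [norm_smul, Complex.norm_real, Real.norm_eq_abs] at h

end CStarAlgebra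

theorem opNorm_eq_norm_toEuclideanCLM {n : Type*} [Fintype n] [DecidableEq n]
    (A : Matrix n n ℂ) : opNorm A = ‖Matrix.toEuclideanCLM (𝕜 := ℂ) A‖ := rfl

theorem opNorm_smul_add_smul_le {m n : Type*} [Fintype m] [Fintype n] [DecidableEq n]
    (A B : Matrix m n ℂ) (s t : ℝ) :
    opNorm ((s : ℂ) • A + (t : ℂ) • B) ≤ √(s ^ 2 + t ^ 2) * opNorm (Matrix.fromCols A B) := by
  refine ContinuousLinearMap.opNorm_le_bound _
    (mul_nonneg (Real.sqrt_nonneg _) (norm_nonneg _)) fun v => ?_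
  let w : EuclideanSpace ℂ (n ⊕ n) :=
    WithLp.toLp 2 (Sum.elim ((s : ℂ) • v.ofLp) ((t : ℂ) • v.ofLp))
  have hw : ‖w‖ = √(s ^ 2 + t ^ 2) * ‖v‖ := by
    rw [EuclideanSpace.norm_eq, EuclideanSpace.norm_eq, ← Real.sqrt_mul (by positivity)]
    simp [w, Fintype.sum_sum_type, mul_pow, Finset.mul_sum, add_mul, Finset.sum_add_distrib]
  calc ‖Matrix.toEuclideanLin ((s : ℂ) • A + (t : ℂ) • B) v‖
      = ‖Matrix.toEuclideanLin (Matrix.fromCols A B) w‖ := by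
        change ‖WithLp.toLp 2 (((s : ℂ) • A + (t : ℂ) • B) *ᵥ v.ofLp)‖ =
          ‖WithLp.toLp 2 (Matrix.fromCols A B *ᵥ w.ofLp)‖
        rw [Matrix.fromCols_mulVec_sumElim, Matrix.add_mulVec, Matrix.smul_mulVec,
          Matrix.smul_mulVec, Matrix.mulVec_smul, Matrix.mulVec_smul]
    _ ≤ opNorm (Matrix.fromCols A B) * ‖w‖ :=
        (Matrix.toEuclideanLin (Matrix.fromCols A B)).toContinuousLinearMap.le_opNorm w
    _ = √(s ^ 2 + t ^ 2) * opNorm (Matrix.fromCols A B) * ‖v‖ := by rw [hw]; ring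

open scoped Matrix.Norms.L2Operator in
theorem circuitState_eq_prod_noisyGate {d N : ℕ} (H : Fin N → Matrix (Fin d) (Fin d) ℂ)
    (ψ₀ : EuclideanSpace ℂ (Fin d)) (ε : Fin N → ℝ) :
    circuitState H ψ₀ ε =
      (List.ofFn fun i => noisyGate (Matrix.toEuclideanCLM (𝕜 := ℂ) (H i)) (ε i)).prod ψ₀ := by
  let _ : NormedAlgebra ℚ (Matrix (Fin d) (Fin d) ℂ) := .restrictScalars ℚ ℂ _
  have hcont : Continuous (Matrix.toEuclideanCLM (𝕜 := ℂ) (n := Fin d)) :=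
    (Matrix.toEuclideanCLM (𝕜 := ℂ) (n := Fin d)).toAlgEquiv.toLinearMap
      |>.continuous_of_finiteDimensional
  change Matrix.toEuclideanCLM (𝕜 := ℂ) _ ψ₀ = _
  simp only [map_list_prod, List.map_ofFn, Function.comp_def, noisyGate, map_exp _ hcont, map_smul]

theorem norm_circuitState_sub_le {d N : ℕ} (H : Fin N → Matrix (Fin d) (Fin d) ℂ)
    (ψ₀ : EuclideanSpace ℂ (Fin d)) (ε ε' : Fin N → ℝ) :
    ‖circuitState H ψ₀ ε - circuitState H ψ₀ ε'‖ ≤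
      ‖(List.ofFn fun i => noisyGate (Matrix.toEuclideanCLM (𝕜 := ℂ) (H i)) (ε i)).prod -
          (List.ofFn fun i => noisyGate (Matrix.toEuclideanCLM (𝕜 := ℂ) (H i)) (ε' i)).prod‖ *
        ‖ψ₀‖ := by
  rw [circuitState_eq_prod_noisyGate, circuitState_eq_prod_noisyGate, ← sub_apply]
  exact ContinuousLinearMap.le_opNorm _ _

section Hermitian

variable {n : Type*} [Fintype n] [DecidableEq n]

theorem norm_noisyGate_mul_sub_le_opNorm_fromCols {A B : Matrix n n ℂ} (hA : A.IsHermitian)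
    (hB : B.IsHermitian) {s t s' t' c : ℝ} (hs : |s - s'| ≤ c) (ht : |t - t'| ≤ c) :
    ‖noisyGate (Matrix.toEuclideanCLM (𝕜 := ℂ) A) s *
          noisyGate (Matrix.toEuclideanCLM (𝕜 := ℂ) B) t -
        noisyGate (Matrix.toEuclideanCLM (𝕜 := ℂ) A) s' *
          noisyGate (Matrix.toEuclideanCLM (𝕜 := ℂ) B) t'‖ ≤
      √2 * opNorm (Matrix.fromCols A B) * c := calc
  _ ≤ opNorm (((s - s' : ℝ) : ℂ) • A + ((t - t' : ℝ) : ℂ) • B) := by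
      simpa [opNorm_eq_norm_toEuclideanCLM] using
        norm_noisyGate_mul_sub_le (hA.isSelfAdjoint.map _) (hB.isSelfAdjoint.map _) s t s' t'
  _ ≤ √((s - s') ^ 2 + (t - t') ^ 2) * opNorm (Matrix.fromCols A B) :=
      opNorm_smul_add_smul_le _ _ _ _
  _ ≤ √2 * c * opNorm (Matrix.fromCols A B) := by
      gcongr
      · exact norm_nonneg _
      · exact Real.sqrt_sq_add_sq_le_sqrt_two_mul hs ht
  _ = √2 * opNorm (Matrix.fromCols A B) * c := by ring

theorem norm_noisyGate_sub_le_opNorm {A : Matrix n n ℂ} (hA : A.IsHermitian) {s s' c : ℝ}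
    (hs : |s - s'| ≤ c) :
    ‖noisyGate (Matrix.toEuclideanCLM (𝕜 := ℂ) A) s -
        noisyGate (Matrix.toEuclideanCLM (𝕜 := ℂ) A) s'‖ ≤
      opNorm A * c := calc
  _ ≤ |s - s'| * opNorm A := norm_noisyGate_sub_le (hA.isSelfAdjoint.map _) s s'
  _ ≤ opNorm A * c := by rw [mul_comm]; exact mul_le_mul_of_nonneg_left hs (norm_nonneg _)

end Hermitian

/-- odd-N case of Theorem 3 of the paper: for odd `N = 2m + 1`, the quantity
`‖H_N‖₂ + √2·Σ_{i=1}^{(N−1)/2} ‖[H_{2i−1} H_{2i}]‖₂` is a Lipschitz bound of `ψ` w.r.t.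
the ∞-norm, where `[H₁ H₂]` is the horizontal concatenation `Matrix.fromColumns H₁ H₂`. -/
theorem pairwise_lipschitz_bound_odd {d m N : ℕ} (hN : N = 2 * m + 1)
    (H : Fin N → Matrix (Fin d) (Fin d) ℂ) (hH : ∀ i, (H i).IsHermitian)
    (ψ₀ : EuclideanSpace ℂ (Fin d)) (hψ₀ : ‖ψ₀‖ = 1) (ε ε' : Fin N → ℝ) :
    ‖circuitState H ψ₀ ε - circuitState H ψ₀ ε'‖ ≤
      (opNorm (H ⟨2 * m, by omega⟩) +
        Real.sqrt 2 *
          ∑ i : Fin m, opNorm (Matrix.fromCols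
            (H ⟨2 * (i : ℕ), by have := i.isLt; omega⟩)
            (H ⟨2 * (i : ℕ) + 1, by have := i.isLt; omega⟩))) * ‖ε - ε'‖ := by
  subst hN
  have hδ : ∀ i, |ε i - ε' i| ≤ ‖ε - ε'‖ := fun i => by simpa using norm_le_pi_norm (ε - ε') i
  have hU : ∀ (θ : Fin (2 * m + 1) → ℝ) i,
      noisyGate (Matrix.toEuclideanCLM (𝕜 := ℂ) (H i)) (θ i) ∈ unitary _ :=
    fun θ i => ((hH i).isSelfAdjoint.map _).noisyGate_mem_unitary _
  calc ‖circuitState H ψ₀ ε - circuitState H ψ₀ ε'‖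
      ≤ _ := (norm_circuitState_sub_le H ψ₀ ε ε').trans_eq (by rw [hψ₀, mul_one])
    _ ≤ _ := norm_prod_ofFn_sub_prod_ofFn_le_of_pairs (hU ε) (hU ε')
    _ ≤ _ := add_le_add
        (Finset.sum_le_sum fun k _ =>
          norm_noisyGate_mul_sub_le_opNorm_fromCols (hH _) (hH _) (hδ _) (hδ _))
        (norm_noisyGate_sub_le_opNorm (hH _) (hδ _))
    _ = _ := by rw [← Finset.sum_mul, ← Finset.mul_sum]; ring
end

section
/- Let N = 2m be even, let H₁, …, H_N be d×d complex Hermitian matrices, let ψ₀ ∈ ℂ^d be a unit vector, and for ε ∈ ℝ^N define ψ(ε) = exp(−i(1+ε₁)H₁)···exp(−i(1+ε_N)H_N)·ψ₀, with ideal state ψ̂ = ψ(0). Then for any ε̄ ≥ 0 and any ε ∈ ℝ^N with ‖ε‖_∞ ≤ ε̄: |⟨ψ(ε), ψ̂⟩| ≥ 1 − (Σ_{i=1}^{m} ‖[H_{2i−1} H_{2i}]‖₂)²·ε̄². -/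
set_option autoImplicit false

open scoped Matrix

/-!
Every gate `exp(-i(1+εⱼ)Hⱼ)` is unitary, so the distance between the noisy and the ideal circuit
unitaries telescopes into a sum over consecutive pairs of gates. In a pair, the ideal gates split
off on both sides and leave `‖exp(-iε₁H₁) exp(-iε₂H₂) - 1‖`, which the mean value inequality along
`t ↦ exp(-itε₁H₁) exp(-itε₂H₂)` bounds by `‖ε₁H₁ + ε₂H₂‖`. Writing
`ε₁H₁ + ε₂H₂ = [H₁ H₂] [ε₁I; ε₂I]` bounds this by `√2 ε̄ ‖[H₁ H₂]‖`. Hence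
`‖ψ(ε) - ψ̂‖ ≤ √2 ε̄ S` for the sum `S` of these norms, and for unit vectors
`Re⟨ψ(ε), ψ̂⟩ = 1 - ‖ψ(ε) - ψ̂‖² / 2 ≥ 1 - S² ε̄²`.
-/

open NormedSpace Complex
open scoped Matrix.Norms.L2Operator

theorem List.prod_ofFn_two_mul {M : Type*} [Monoid M] {m : ℕ} (f : Fin (2 * m) → M) :
    (List.ofFn f).prod =
      (List.ofFn fun i : Fin m => f ⟨2 * i, by omega⟩ * f ⟨2 * i + 1, by omega⟩).prod := by
  rw [List.ofFn_mul', List.prod_flatten, List.map_ofFn]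
  congr 1
  ext1 i
  simp [List.ofFn_succ]

section CStarRing

variable {E : Type*} [NormedRing E] [StarRing E] [CStarRing E]

theorem norm_prod_ofFn_sub_prod_ofFn_le_of_mem_unitary {n : ℕ} (f g : Fin n → E)
    (hf : ∀ i, f i ∈ unitary E) (hg : ∀ i, g i ∈ unitary E) :
    ‖(List.ofFn f).prod - (List.ofFn g).prod‖ ≤ ∑ i, ‖f i - g i‖ := by
  induction n with
  | zero => simp
  | succ n ih =>
    set P := (List.ofFn fun i => f i.succ).prod
    set Q := (List.ofFn fun i => g i.succ).prod
    have hQ : Q ∈ unitary E :=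
      Submonoid.list_prod_mem _ (List.forall_mem_ofFn_iff.mpr fun i => hg i.succ)
    have hsplit : f 0 * P - g 0 * Q = f 0 * (P - Q) + (f 0 - g 0) * Q := by noncomm_ring
    rw [List.ofFn_succ, List.ofFn_succ, List.prod_cons, List.prod_cons, hsplit,
      Fin.sum_univ_succ, add_comm ‖f 0 - g 0‖]
    refine (norm_add_le _ _).trans (add_le_add ?_ (CStarRing.norm_mul_mem_unitary _ hQ).le)
    rw [CStarRing.norm_mem_unitary_mul _ (hf 0)]
    exact ih _ _ (fun i => hf _) fun i => hg _

end CStarRing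

section CStarAlgebra

variable {A : Type*} [CStarAlgebra A]

theorem norm_exp_mul_exp_sub_one_le_s10 {X Y : A} (hX : X ∈ skewAdjoint A) (hY : Y ∈ skewAdjoint A) :
    ‖exp X * exp Y - 1‖ ≤ ‖X + Y‖ := by
  -- the library's `exp` lemmas are stated for normed `ℚ`-algebras
  let +nondep : NormedAlgebra ℚ A := .restrictScalars ℚ ℂ A
  have hunitary : ∀ (t : ℝ) {Z : A}, Z ∈ skewAdjoint A → exp (t • Z) ∈ unitary A := fun t _ hZ =>
    exp_mem_unitary_of_mem_skewAdjoint (skewAdjoint.smul_mem t hZ)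
  let f : ℝ → A := fun t => exp (t • X) * exp (t • Y)
  have hderiv : ∀ t : ℝ, HasDerivAt f (exp (t • X) * ((X + Y) * exp (t • Y))) t := fun t =>
    ((hasDerivAt_exp_smul_const X t).mul (hasDerivAt_exp_smul_const' Y t)).congr_deriv
      (by noncomm_ring)
  have hbound : ∀ t : ℝ, ‖exp (t • X) * ((X + Y) * exp (t • Y))‖ = ‖X + Y‖ := fun t => by
    rw [CStarRing.norm_mem_unitary_mul _ (hunitary t hX),
      CStarRing.norm_mul_mem_unitary _ (hunitary t hY)]
  simpa [f] using norm_image_sub_le_of_norm_deriv_le_segment_01' (f := f)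
    (fun t _ => (hderiv t).hasDerivWithinAt) fun t _ => (hbound t).le

theorem IsSelfAdjoint.neg_I_mul_smul_mem_skewAdjoint {a : A} (ha : IsSelfAdjoint a) (r : ℝ) :
    (-I * r) • a ∈ skewAdjoint A :=
  ha.smul_mem_skewAdjoint <| skewAdjoint.mem_iff.mpr <| by simp

theorem IsSelfAdjoint.exp_neg_I_mul_smul_mem_unitary {a : A} (ha : IsSelfAdjoint a) (r : ℝ) :
    NormedSpace.exp ((-I * r) • a) ∈ unitary A := by
  let +nondep : NormedAlgebra ℚ A := .restrictScalars ℚ ℂ A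
  exact exp_mem_unitary_of_mem_skewAdjoint (ha.neg_I_mul_smul_mem_skewAdjoint r)

theorem norm_exp_mul_exp_sub_exp_mul_exp_le {a b : A} (ha : IsSelfAdjoint a)
    (hb : IsSelfAdjoint b) (s₁ s₂ t₁ t₂ : ℝ) :
    ‖exp ((-I * s₁) • a) * exp ((-I * s₂) • b) - exp ((-I * t₁) • a) * exp ((-I * t₂) • b)‖ ≤
      ‖((s₁ - t₁ : ℝ) : ℂ) • a + ((s₂ - t₂ : ℝ) : ℂ) • b‖ := by
  let +nondep : NormedAlgebra ℚ A := .restrictScalars ℚ ℂ A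
  have hsplit : ∀ (c : A) (s t : ℝ),
      exp ((-I * s) • c) = exp ((-I * t) • c) * exp ((-I * (s - t : ℝ)) • c) := by
    intro c s t
    rw [← exp_add_of_commute (((Commute.refl c).smul_left _).smul_right _), ← add_smul]
    congr 2
    push_cast
    ring
  have hcomm : Commute (exp ((-I * t₂) • b)) (exp ((-I * (s₂ - t₂ : ℝ)) • b)) :=
    (((Commute.refl b).smul_left _).smul_right _).exp
  rw [hsplit a s₁ t₁, hsplit b s₂ t₂, hcomm.eq]
  set U₁ := exp ((-I * t₁) • a)
  set U₂ := exp ((-I * t₂) • b)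
  set X := (-I * (s₁ - t₁ : ℝ)) • a
  set Y := (-I * (s₂ - t₂ : ℝ)) • b
  have hfactor : U₁ * exp X * (exp Y * U₂) - U₁ * U₂ = U₁ * ((exp X * exp Y - 1) * U₂) := by
    noncomm_ring
  have hXY : X + Y = -I • (((s₁ - t₁ : ℝ) : ℂ) • a + ((s₂ - t₂ : ℝ) : ℂ) • b) := by
    simp only [X, Y, smul_add, smul_smul]
  rw [hfactor, CStarRing.norm_mem_unitary_mul _ (ha.exp_neg_I_mul_smul_mem_unitary t₁),
    CStarRing.norm_mul_mem_unitary _ (hb.exp_neg_I_mul_smul_mem_unitary t₂)]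
  calc ‖exp X * exp Y - 1‖ ≤ ‖X + Y‖ :=
        norm_exp_mul_exp_sub_one_le_s10 (ha.neg_I_mul_smul_mem_skewAdjoint _)
          (hb.neg_I_mul_smul_mem_skewAdjoint _)
    _ = _ := by rw [hXY, norm_smul, norm_neg, norm_I, one_mul]

end CStarAlgebra

namespace Matrix

variable {𝕜 : Type*} [RCLike 𝕜] {m n : Type*} [Fintype m] [Fintype n] [DecidableEq n]

theorem l2_opNorm_one_le : ‖(1 : Matrix n n 𝕜)‖ ≤ 1 := by
  rw [← diagonal_one, l2_opNorm_diagonal]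
  exact pi_norm_le_iff_of_nonneg zero_le_one |>.mpr fun _ => by simp

theorem l2_opNorm_fromRows_smul_one_le (c₁ c₂ : 𝕜) :
    ‖fromRows (c₁ • (1 : Matrix n n 𝕜)) (c₂ • (1 : Matrix n n 𝕜))‖ ≤
      √(‖c₁‖ ^ 2 + ‖c₂‖ ^ 2) := by
  set B := fromRows (c₁ • (1 : Matrix n n 𝕜)) (c₂ • (1 : Matrix n n 𝕜))
  have hBB : Bᴴ * B = ((‖c₁‖ ^ 2 + ‖c₂‖ ^ 2 : ℝ) : 𝕜) • 1 := by
    simp [B, conjTranspose_fromRows_eq_fromCols_conjTranspose, fromCols_mul_fromRows,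
      add_smul, smul_smul, RCLike.mul_conj]
  refine Real.le_sqrt_of_sq_le ?_
  calc ‖B‖ ^ 2 = ‖Bᴴ * B‖ := by rw [l2_opNorm_conjTranspose_mul_self, sq]
    _ ≤ ‖c₁‖ ^ 2 + ‖c₂‖ ^ 2 := by
      rw [hBB, norm_smul, RCLike.norm_ofReal, abs_of_nonneg (by positivity)]
      exact mul_le_of_le_one_right (by positivity) l2_opNorm_one_le

theorem l2_opNorm_smul_add_smul_le_fromCols (A₁ A₂ : Matrix m n 𝕜) (c₁ c₂ : 𝕜) :
    ‖c₁ • A₁ + c₂ • A₂‖ ≤ √(‖c₁‖ ^ 2 + ‖c₂‖ ^ 2) * ‖fromCols A₁ A₂‖ := by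
  have h : c₁ • A₁ + c₂ • A₂ =
      fromCols A₁ A₂ * fromRows (c₁ • (1 : Matrix n n 𝕜)) (c₂ • (1 : Matrix n n 𝕜)) := by
    simp [fromCols_mul_fromRows]
  rw [h, mul_comm √_]
  exact (l2_opNorm_mul _ _).trans <|
    mul_le_mul_of_nonneg_left (l2_opNorm_fromRows_smul_one_le c₁ c₂) (norm_nonneg _)

theorem norm_toEuclideanLin_of_mem_unitary {U : Matrix n n 𝕜} (hU : U ∈ unitary (Matrix n n 𝕜))
    (x : EuclideanSpace 𝕜 n) : ‖toEuclideanLin U x‖ = ‖x‖ :=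
  (toEuclideanCLM (n := n) (𝕜 := 𝕜) U).norm_map_of_mem_unitary (Unitary.map_mem _ hU) x

end Matrix

theorem one_sub_norm_sub_sq_div_two_le_norm_inner {𝕜 E : Type*} [RCLike 𝕜]
    [NormedAddCommGroup E] [InnerProductSpace 𝕜 E] {u v : E} (hu : ‖u‖ = 1) (hv : ‖v‖ = 1) :
    1 - ‖u - v‖ ^ 2 / 2 ≤ ‖(inner 𝕜 u v : 𝕜)‖ := by
  have h := norm_sub_sq (𝕜 := 𝕜) u v
  rw [hu, hv] at h
  linarith [RCLike.re_le_norm (inner 𝕜 u v : 𝕜)]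

section Circuit

variable {d N : ℕ}

noncomputable def circuitUnitary (H : Fin N → Matrix (Fin d) (Fin d) ℂ) (ε : Fin N → ℝ) :
    Matrix (Fin d) (Fin d) ℂ :=
  (List.ofFn fun i => exp ((-I * ↑(1 + ε i)) • H i)).prod

theorem circuitState_eq_toEuclideanLin (H : Fin N → Matrix (Fin d) (Fin d) ℂ)
    (ψ₀ : EuclideanSpace ℂ (Fin d)) (ε : Fin N → ℝ) :
    circuitState H ψ₀ ε = Matrix.toEuclideanLin (circuitUnitary H ε) ψ₀ := by
  simp [circuitState, circuitUnitary]

theorem circuitUnitary_mem_unitary {H : Fin N → Matrix (Fin d) (Fin d) ℂ}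
    (hH : ∀ i, (H i).IsHermitian) (ε : Fin N → ℝ) :
    circuitUnitary H ε ∈ unitary (Matrix (Fin d) (Fin d) ℂ) :=
  Submonoid.list_prod_mem _ <| List.forall_mem_ofFn_iff.mpr fun i =>
    (hH i).isSelfAdjoint.exp_neg_I_mul_smul_mem_unitary _

theorem norm_circuitState {H : Fin N → Matrix (Fin d) (Fin d) ℂ} (hH : ∀ i, (H i).IsHermitian)
    {ψ₀ : EuclideanSpace ℂ (Fin d)} (hψ₀ : ‖ψ₀‖ = 1) (ε : Fin N → ℝ) :
    ‖circuitState H ψ₀ ε‖ = 1 := by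
  rw [circuitState_eq_toEuclideanLin,
    Matrix.norm_toEuclideanLin_of_mem_unitary (circuitUnitary_mem_unitary hH ε), hψ₀]

theorem norm_circuitUnitary_sub_le {m : ℕ} {H : Fin (2 * m) → Matrix (Fin d) (Fin d) ℂ}
    (hH : ∀ i, (H i).IsHermitian) (ε δ : Fin (2 * m) → ℝ) :
    ‖circuitUnitary H ε - circuitUnitary H δ‖ ≤
      ∑ i : Fin m, ‖((ε ⟨2 * i, by omega⟩ - δ ⟨2 * i, by omega⟩ : ℝ) : ℂ) • H ⟨2 * i, by omega⟩ +
        ((ε ⟨2 * i + 1, by omega⟩ - δ ⟨2 * i + 1, by omega⟩ : ℝ) : ℂ) •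
          H ⟨2 * i + 1, by omega⟩‖ := by
  have hgate : ∀ (η : Fin (2 * m) → ℝ) i, exp ((-I * ↑(1 + η i)) • H i) ∈ unitary _ :=
    fun η i => (hH i).isSelfAdjoint.exp_neg_I_mul_smul_mem_unitary _
  rw [circuitUnitary, circuitUnitary, List.prod_ofFn_two_mul, List.prod_ofFn_two_mul]
  refine (norm_prod_ofFn_sub_prod_ofFn_le_of_mem_unitary _ _
    (fun _ => mul_mem (hgate _ _) (hgate _ _)) fun _ => mul_mem (hgate _ _) (hgate _ _)).trans
    (Finset.sum_le_sum fun i _ => ?_)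
  refine (norm_exp_mul_exp_sub_exp_mul_exp_le (hH _).isSelfAdjoint (hH _).isSelfAdjoint
    _ _ _ _).trans_eq ?_
  simp only [add_sub_add_left_eq_sub]

theorem norm_circuitUnitary_sub_le_of_norm_le {m : ℕ} {H : Fin (2 * m) → Matrix (Fin d) (Fin d) ℂ}
    (hH : ∀ i, (H i).IsHermitian) {ε : Fin (2 * m) → ℝ} {εbar : ℝ} (hε : ‖ε‖ ≤ εbar) :
    ‖circuitUnitary H ε - circuitUnitary H 0‖ ≤
      √2 * εbar * ∑ i : Fin m,
        ‖Matrix.fromCols (H ⟨2 * i, by omega⟩) (H ⟨2 * i + 1, by omega⟩)‖ := by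
  have hεbar : 0 ≤ εbar := (norm_nonneg ε).trans hε
  have hcoord : ∀ j, ‖((ε j - (0 : Fin (2 * m) → ℝ) j : ℝ) : ℂ)‖ ≤ εbar := fun j => by
    simpa using (norm_le_pi_norm ε j).trans hε
  refine (norm_circuitUnitary_sub_le hH ε 0).trans ?_
  rw [Finset.mul_sum]
  refine Finset.sum_le_sum fun i _ => (Matrix.l2_opNorm_smul_add_smul_le_fromCols _ _ _ _).trans ?_
  gcongr
  calc √(‖((ε ⟨2 * i, _⟩ - 0 : ℝ) : ℂ)‖ ^ 2 + ‖((ε ⟨2 * i + 1, _⟩ - 0 : ℝ) : ℂ)‖ ^ 2)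
      ≤ √(εbar ^ 2 + εbar ^ 2) := by gcongr <;> exact hcoord _
    _ = √2 * εbar := by rw [← two_mul, Real.sqrt_mul zero_le_two, Real.sqrt_sq hεbar]

end Circuit

/-- pair-wise worst-case fidelity bound, even N: for `N = 2m`, any `ε̄ ≥ 0`
and any `ε` with `‖ε‖_∞ ≤ ε̄`, the fidelity between the noisy state `ψ(ε)` and the ideal
state `ψ̂ = ψ(0)` satisfies `|⟨ψ(ε), ψ̂⟩| ≥ 1 − (Σ_{i=1}^{m} ‖[H_{2i−1} H_{2i}]‖₂)²·ε̄²`. -/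
theorem pairwise_worst_case_fidelity_even {d m N : ℕ} (hN : N = 2 * m)
    (H : Fin N → Matrix (Fin d) (Fin d) ℂ) (hH : ∀ i, (H i).IsHermitian)
    (ψ₀ : EuclideanSpace ℂ (Fin d)) (hψ₀ : ‖ψ₀‖ = 1)
    (εbar : ℝ) (ε : Fin N → ℝ) (hε : ‖ε‖ ≤ εbar) :
    1 - (∑ i : Fin m, opNorm (Matrix.fromCols
          (H ⟨2 * (i : ℕ), by have := i.isLt; omega⟩)
          (H ⟨2 * (i : ℕ) + 1, by have := i.isLt; omega⟩))) ^ 2 * εbar ^ 2 ≤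
      ‖(inner ℂ (circuitState H ψ₀ ε) (circuitState H ψ₀ 0) : ℂ)‖ := by
  subst hN
  set S := ∑ i : Fin m, opNorm (Matrix.fromCols (H ⟨2 * (i : ℕ), by omega⟩)
    (H ⟨2 * (i : ℕ) + 1, by omega⟩))
  have hdist : ‖circuitState H ψ₀ ε - circuitState H ψ₀ 0‖ ≤ √2 * εbar * S := by
    rw [circuitState_eq_toEuclideanLin, circuitState_eq_toEuclideanLin, ← LinearMap.sub_apply,
      ← map_sub]
    calc _ ≤ ‖circuitUnitary H ε - circuitUnitary H 0‖ * ‖ψ₀‖ := Matrix.l2_opNorm_mulVec _ _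
      _ ≤ √2 * εbar * S := by
        rw [hψ₀, mul_one]
        exact norm_circuitUnitary_sub_le_of_norm_le hH hε
  calc 1 - S ^ 2 * εbar ^ 2 = 1 - (√2 * εbar * S) ^ 2 / 2 := by
        rw [mul_pow, mul_pow, Real.sq_sqrt zero_le_two]
        ring
    _ ≤ 1 - ‖circuitState H ψ₀ ε - circuitState H ψ₀ 0‖ ^ 2 / 2 := by gcongr
    _ ≤ _ := one_sub_norm_sub_sq_div_two_le_norm_inner (norm_circuitState hH hψ₀ ε)
        (norm_circuitState hH hψ₀ 0)
end
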